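/- Let κ > 0. Then for every 𝔮 ∈ ℝ, the constrained infimum of the energy is −∞: inf{ E_κ(u) : u ∈ 𝒳(ℝ), inf_{x∈ℝ}|u(x)| > 0, P(u) = 𝔮 } = −∞. -/

import Mathlib

/-!
Under the dilation `u ↦ u (s ·)` the two gradient terms of the energy scale like `s`, the
potential term like `1 / s`, and the momentum is invariant. It therefore suffices to find one
admissible map `U` with momentum `𝔮` whose gradient part `∫ |U'|² - (κ/2) ∫ ((|U|²)')²` is
negative; letting `s → ∞` then drives the energy to `-∞`.

Such a `U` is `(1 + A e^{-x²}) e^{i t Φ(x)}` with `Φ' = e^{-x²}`. The momentum is `t` times a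
quantity of size at least `A`, so the phase speed `t` realising momentum `𝔮` has
`t² (1 + A)² = O(𝔮²)`, while `∫ ((|U|²)')²` grows like `A⁴` and `∫ |U'|²` only like
`A² + t² (1 + A)²`. A large amplitude `A` makes the gradient part negative.
-/

open MeasureTheory Real Filter Set

noncomputable section

/-- Membership in the energy space `𝒳(ℝ)`:
`u' ∈ L²(ℝ)` and `1 - |u|² ∈ L²(ℝ)`. -/
def inX (u : ℝ → ℂ) : Prop :=
  MemLp (deriv u) 2 (volume : Measure ℝ) ∧
  MemLp (fun x : ℝ => 1 - ‖u x‖ ^ 2) 2 (volume : Measure ℝ)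

/-- The energy `E_κ(u) = ∫ |u'|² + (1/2)∫ (1-|u|²)² - (κ/2)∫ ((|u|²)')²`. -/
def energy (κ : ℝ) (u : ℝ → ℂ) : ℝ :=
  (∫ x : ℝ, ‖deriv u x‖ ^ 2)
    + (1 / 2) * (∫ x : ℝ, (1 - ‖u x‖ ^ 2) ^ 2)
    - (κ / 2) * (∫ x : ℝ, (deriv (fun y : ℝ => ‖u y‖ ^ 2) x) ^ 2)

/-- The (renormalized) momentum `P(u) = -∫ Re(i u' conj u) (1 - 1/|u|²)`. -/
def momentum (u : ℝ → ℂ) : ℝ :=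
  -∫ x : ℝ, (Complex.I * deriv u x * (starRingEnd ℂ) (u x)).re
      * (1 - 1 / ‖u x‖ ^ 2)

theorem exists_pos_mul_add_inv_mul_lt {D : ℝ} (hD : D < 0) (B M : ℝ) :
    ∃ s > 0, s * D + s⁻¹ * B < M := by
  have h : Tendsto (fun s => s * D + s⁻¹ * B) atTop atBot :=
    (tendsto_id.atTop_mul_const_of_neg hD).atBot_add (tendsto_inv_atTop_zero.mul_const B)
  exact ((eventually_gt_atTop 0).and (h.eventually_lt_atBot M)).exists

theorem exists_one_le_sq_mul_add_lt {c : ℝ} (hc : 0 < c) (a Q : ℝ) :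
    ∃ A, 1 ≤ A ∧ A ^ 2 * a + Q < c * A ^ 4 := by
  set X := max 1 ((|a| + |Q| + 1) / c)
  have hX1 : 1 ≤ X := le_max_left _ _
  have hXc : |a| + |Q| + 1 ≤ c * X := (div_le_iff₀' hc).1 (le_max_right _ _)
  refine ⟨X, hX1, ?_⟩
  have hX2 : 1 ≤ X ^ 2 := one_le_pow₀ hX1
  have hX3 : X ^ 2 ≤ X ^ 3 := pow_le_pow_right₀ hX1 (by norm_num)
  have key := mul_le_mul_of_nonneg_right hXc (by positivity : (0 : ℝ) ≤ X ^ 3)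
  nlinarith [le_abs_self a, le_abs_self Q, abs_nonneg a, abs_nonneg Q]

theorem integral_pos_of_pos_on_Ioi {f : ℝ → ℝ} (hf : Integrable f) (h0 : ∀ x, 0 ≤ f x)
    (hpos : ∀ x, 0 < x → 0 < f x) : 0 < ∫ x, f x := by
  rw [integral_pos_iff_support_of_nonneg h0 hf]
  calc (0 : ENNReal) < volume (Ioi (0 : ℝ)) := by simp
    _ ≤ volume (Function.support f) := measure_mono fun x hx => (hpos x hx).ne'

theorem integrable_of_nonneg_of_le {f g : ℝ → ℝ} (hf : AEStronglyMeasurable f)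
    (hg : Integrable g) (h0 : ∀ x, 0 ≤ f x) (hle : ∀ x, f x ≤ g x) : Integrable f :=
  integrable_of_le_of_le hf (ae_of_all _ h0) (ae_of_all _ hle) (integrable_zero _ _ _) hg

def FiniteEnergy (u : ℝ → ℂ) : Prop :=
  Integrable (fun x => ‖deriv u x‖ ^ 2) ∧
  Integrable (fun x => (1 - ‖u x‖ ^ 2) ^ 2) ∧
  Integrable (fun x => (deriv (fun y => ‖u y‖ ^ 2) x) ^ 2)

def gradientEnergy (κ : ℝ) (u : ℝ → ℂ) : ℝ :=
  (∫ x, ‖deriv u x‖ ^ 2) - κ / 2 * ∫ x, (deriv (fun y => ‖u y‖ ^ 2) x) ^ 2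

def potentialEnergy (u : ℝ → ℂ) : ℝ :=
  1 / 2 * ∫ x, (1 - ‖u x‖ ^ 2) ^ 2

section Scaling

variable {U : ℝ → ℂ} {s : ℝ}

theorem momentum_comp_mul_left (hs : 0 < s) : momentum (fun x => U (s * x)) = momentum U := by
  unfold momentum
  simp only [deriv_comp_mul_left s U, Complex.real_smul]
  calc _ = -∫ x, s * ((Complex.I * deriv U (s * x) * (starRingEnd ℂ) (U (s * x))).re
        * (1 - 1 / ‖U (s * x)‖ ^ 2)) := by
        congr 2 with x
        simp only [mul_assoc, Complex.re_ofReal_mul, ← mul_left_comm (s : ℂ)]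
    _ = _ := by
        rw [integral_const_mul, Measure.integral_comp_mul_left
          (fun y => (Complex.I * deriv U y * (starRingEnd ℂ) (U y)).re * (1 - 1 / ‖U y‖ ^ 2)),
          abs_of_pos (inv_pos.2 hs), smul_eq_mul, mul_inv_cancel_left₀ hs.ne']

theorem energy_comp_mul_left (κ : ℝ) (hs : 0 < s) :
    energy κ (fun x => U (s * x)) = s * gradientEnergy κ U + s⁻¹ * potentialEnergy U := by
  have hscale : ∀ g : ℝ → ℝ, ∫ x, g (s * x) = s⁻¹ * ∫ x, g x := fun g => by
    rw [Measure.integral_comp_mul_left, abs_of_pos (inv_pos.2 hs), smul_eq_mul]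
  unfold energy gradientEnergy potentialEnergy
  simp only [deriv_comp_mul_left s U, deriv_comp_mul_left s (fun y => ‖U y‖ ^ 2), norm_smul,
    smul_eq_mul, mul_pow, Real.norm_eq_abs, sq_abs, integral_const_mul,
    hscale (fun y => ‖deriv U y‖ ^ 2), hscale (fun y => (1 - ‖U y‖ ^ 2) ^ 2),
    hscale (fun y => (deriv (fun y => ‖U y‖ ^ 2) y) ^ 2)]
  field_simp
  ring

theorem FiniteEnergy.comp_mul_left (hU : FiniteEnergy U) (hs : s ≠ 0) :
    FiniteEnergy (fun x => U (s * x)) := by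
  obtain ⟨h₁, h₂, h₃⟩ := hU
  refine ⟨?_, h₂.comp_mul_left' hs, ?_⟩
  · simpa only [deriv_comp_mul_left s U, norm_smul, mul_pow, Real.norm_eq_abs, sq_abs]
      using (h₁.comp_mul_left' hs).const_mul (s ^ 2)
  · simpa only [deriv_comp_mul_left s (fun y => ‖U y‖ ^ 2), smul_eq_mul, mul_pow]
      using (h₃.comp_mul_left' hs).const_mul (s ^ 2)

theorem FiniteEnergy.inX (hU : FiniteEnergy U) (hc : Continuous U) : inX U :=
  ⟨(memLp_two_iff_integrable_sq_norm (aestronglyMeasurable_deriv U volume)).2 hU.1,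
    (memLp_two_iff_integrable_sq (by fun_prop)).2 hU.2.1⟩

end Scaling

def polar (ρ φ : ℝ → ℝ) (x : ℝ) : ℂ := ρ x * Complex.exp (φ x * Complex.I)

section Polar

variable {ρ φ ρ' φ' : ℝ → ℝ}

theorem norm_polar (x : ℝ) : ‖polar ρ φ x‖ = |ρ x| := by
  rw [polar, norm_mul, Complex.norm_exp_ofReal_mul_I, Complex.norm_real, Real.norm_eq_abs, mul_one]

theorem re_I_mul_mul_conj_polar (a r ω θ : ℝ) :
    (Complex.I * ((a + r * ω * Complex.I) * Complex.exp (θ * Complex.I)) *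
      (starRingEnd ℂ) (r * Complex.exp (θ * Complex.I))).re = -(r ^ 2 * ω) := by
  have he :
      Complex.exp (θ * Complex.I) * (starRingEnd ℂ) (Complex.exp (θ * Complex.I)) = 1 := by
    rw [Complex.mul_conj, Complex.normSq_eq_norm_sq, Complex.norm_exp_ofReal_mul_I]; simp
  calc _ = (Complex.I * (a + r * ω * Complex.I) * r *
        (Complex.exp (θ * Complex.I) * (starRingEnd ℂ) (Complex.exp (θ * Complex.I)))).re := by
        rw [map_mul, Complex.conj_ofReal]; ring_nf
    _ = -(r ^ 2 * ω) := by rw [he, mul_one]; simp [sq, mul_comm, mul_left_comm]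

theorem hasDerivAt_polar {x : ℝ} (hρ : HasDerivAt ρ (ρ' x) x) (hφ : HasDerivAt φ (φ' x) x) :
    HasDerivAt (polar ρ φ)
      ((ρ' x + ρ x * φ' x * Complex.I) * Complex.exp (φ x * Complex.I)) x :=
  (hρ.ofReal_comp.mul (hφ.ofReal_comp.mul_const Complex.I).cexp).congr_deriv (by ring)

theorem deriv_polar (hρ : ∀ x, HasDerivAt ρ (ρ' x) x) (hφ : ∀ x, HasDerivAt φ (φ' x) x) :
    deriv (polar ρ φ) =
      fun x => (ρ' x + ρ x * φ' x * Complex.I) * Complex.exp (φ x * Complex.I) :=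
  funext fun x => (hasDerivAt_polar (hρ x) (hφ x)).deriv

theorem norm_deriv_polar_sq (hρ : ∀ x, HasDerivAt ρ (ρ' x) x)
    (hφ : ∀ x, HasDerivAt φ (φ' x) x) (x : ℝ) :
    ‖deriv (polar ρ φ) x‖ ^ 2 = ρ' x ^ 2 + (ρ x * φ' x) ^ 2 := by
  rw [deriv_polar hρ hφ, norm_mul, Complex.norm_exp_ofReal_mul_I, mul_one,
    ← Complex.normSq_eq_norm_sq]
  exact_mod_cast Complex.normSq_add_mul_I (ρ' x) (ρ x * φ' x)

theorem deriv_norm_polar_sq (hρ : ∀ x, HasDerivAt ρ (ρ' x) x) (φ : ℝ → ℝ) (x : ℝ) :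
    deriv (fun y => ‖polar ρ φ y‖ ^ 2) x = 2 * ρ x * ρ' x := by
  simp only [norm_polar, sq_abs]
  exact ((hρ x).pow 2).deriv.trans (by ring)

theorem momentum_polar (hρ : ∀ x, HasDerivAt ρ (ρ' x) x) (hφ : ∀ x, HasDerivAt φ (φ' x) x)
    (hpos : ∀ x, ρ x ≠ 0) :
    momentum (polar ρ φ) = ∫ x, φ' x * (ρ x ^ 2 - 1) := by
  unfold momentum
  rw [← integral_neg]
  congr 1 with x
  rw [deriv_polar hρ hφ, norm_polar, sq_abs, polar]
  beta_reduce
  rw [re_I_mul_mul_conj_polar]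
  field_simp [hpos x]

end Polar

def bump (x : ℝ) : ℝ := exp (-x ^ 2)

def phase (x : ℝ) : ℝ := ∫ y in (0 : ℝ)..x, bump y

def amplitude (A x : ℝ) : ℝ := 1 + A * bump x

def profile (A t : ℝ) : ℝ → ℂ := polar (amplitude A) fun x => t * phase x

def amplitudeMass (A : ℝ) : ℝ := ∫ x, bump x * (amplitude A x ^ 2 - 1)

section Profile

variable {A t x : ℝ}

theorem bump_pos : 0 < bump x := exp_pos _

theorem bump_le_one : bump x ≤ 1 := exp_le_one_iff.2 (by nlinarith)

theorem continuous_bump : Continuous bump := by unfold bump; fun_prop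

theorem hasDerivAt_bump (x : ℝ) : HasDerivAt bump (-2 * x * bump x) x := by
  refine ((hasDerivAt_pow 2 x).neg.exp).congr_deriv ?_
  simp only [bump, Pi.neg_apply]; ring

theorem hasDerivAt_phase (x : ℝ) : HasDerivAt phase (bump x) x :=
  intervalIntegral.integral_hasDerivAt_right (continuous_bump.intervalIntegrable _ _)
    (continuous_bump.stronglyMeasurableAtFilter _ _) continuous_bump.continuousAt

theorem hasDerivAt_amplitude (A x : ℝ) :
    HasDerivAt (amplitude A) (A * (-2 * x * bump x)) x :=
  ((hasDerivAt_bump x).const_mul A).const_add 1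

theorem one_le_amplitude (hA : 0 ≤ A) : 1 ≤ amplitude A x := by
  have := bump_pos (x := x)
  unfold amplitude; nlinarith

theorem amplitude_le (hA : 0 ≤ A) : amplitude A x ≤ 1 + A := by
  have := bump_le_one (x := x)
  unfold amplitude; nlinarith

theorem amplitude_sq_sub_one : amplitude A x ^ 2 - 1 = A * bump x * (2 + A * bump x) := by
  unfold amplitude; ring

theorem integrable_bump_sq : Integrable fun x => bump x ^ 2 := by
  simpa [bump, ← exp_nat_mul, ← neg_mul] using integrable_exp_neg_mul_sq (b := 2) two_pos

theorem integrable_two_mul_mul_bump_sq : Integrable fun x => (2 * x * bump x) ^ 2 := by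
  have := (integrable_rpow_mul_exp_neg_mul_sq (b := 2) two_pos (s := 2) (by norm_num)).const_mul 4
  simpa [bump, mul_pow, ← exp_nat_mul, ← neg_mul, mul_assoc, show (2 : ℝ) ^ 2 = 4 by norm_num]
    using this

theorem integrable_bump_mul_two_mul_mul_bump_sq :
    Integrable fun x => (bump x * (2 * x * bump x)) ^ 2 :=
  integrable_of_nonneg_of_le (by unfold bump; fun_prop) integrable_two_mul_mul_bump_sq
    (fun _ => sq_nonneg _) fun x => by
      rw [mul_pow]
      exact mul_le_of_le_one_left (sq_nonneg _) (pow_le_one₀ bump_pos.le bump_le_one)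

theorem hasDerivAt_const_mul_phase (t x : ℝ) :
    HasDerivAt (fun x => t * phase x) (t * bump x) x :=
  (hasDerivAt_phase x).const_mul t

theorem differentiable_profile : Differentiable ℝ (profile A t) := fun x =>
  (hasDerivAt_polar (ρ' := fun x => A * (-2 * x * bump x)) (φ' := fun x => t * bump x)
    (hasDerivAt_amplitude A x) (hasDerivAt_const_mul_phase t x)).differentiableAt

theorem norm_profile (hA : 0 ≤ A) (x : ℝ) : ‖profile A t x‖ = amplitude A x := by
  rw [profile, norm_polar, abs_of_pos (zero_lt_one.trans_le (one_le_amplitude hA))]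

theorem norm_deriv_profile_sq (x : ℝ) :
    ‖deriv (profile A t) x‖ ^ 2 =
      (A * (-2 * x * bump x)) ^ 2 + (amplitude A x * (t * bump x)) ^ 2 :=
  norm_deriv_polar_sq (hasDerivAt_amplitude A) (hasDerivAt_const_mul_phase t) x

theorem deriv_norm_profile_sq (x : ℝ) :
    deriv (fun y => ‖profile A t y‖ ^ 2) x = 2 * amplitude A x * (A * (-2 * x * bump x)) :=
  deriv_norm_polar_sq (hasDerivAt_amplitude A) _ x

theorem momentum_profile (hA : 0 ≤ A) : momentum (profile A t) = t * amplitudeMass A := by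
  rw [profile, momentum_polar (hasDerivAt_amplitude A) (hasDerivAt_const_mul_phase t)
    fun x => (zero_lt_one.trans_le (one_le_amplitude hA)).ne', amplitudeMass,
    ← integral_const_mul]
  simp only [mul_assoc]

theorem amplitude_sq_le (hA : 0 ≤ A) (x : ℝ) : amplitude A x ^ 2 ≤ (1 + A) ^ 2 :=
  pow_le_pow_left₀ (zero_le_one.trans (one_le_amplitude hA)) (amplitude_le hA) 2

theorem mul_bump_mul_le (hA : 0 ≤ A) (x : ℝ) :
    A * bump x * (2 + A * bump x) ≤ A * (2 + A) * bump x := by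
  have h₀ : 0 ≤ A * bump x := mul_nonneg hA bump_pos.le
  have h₁ : A * bump x ≤ A := mul_le_of_le_one_right hA bump_le_one
  nlinarith [mul_le_mul_of_nonneg_left h₁ h₀]

theorem norm_deriv_profile_sq_le (hA : 0 ≤ A) (x : ℝ) :
    ‖deriv (profile A t) x‖ ^ 2 ≤
      A ^ 2 * (2 * x * bump x) ^ 2 + t ^ 2 * (1 + A) ^ 2 * bump x ^ 2 := by
  rw [norm_deriv_profile_sq]
  nlinarith [mul_le_mul_of_nonneg_right (amplitude_sq_le hA x) (sq_nonneg (t * bump x))]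

theorem one_sub_norm_profile_sq_sq_le (hA : 0 ≤ A) (x : ℝ) :
    (1 - ‖profile A t x‖ ^ 2) ^ 2 ≤ (A * (2 + A)) ^ 2 * bump x ^ 2 := by
  rw [norm_profile hA, ← neg_sub, neg_sq, amplitude_sq_sub_one, ← mul_pow]
  have h₀ : 0 ≤ A * bump x := mul_nonneg hA bump_pos.le
  exact pow_le_pow_left₀ (by positivity) ((mul_bump_mul_le hA x).trans_eq (by ring)) 2

theorem deriv_norm_profile_sq_sq_le (hA : 0 ≤ A) (x : ℝ) :
    (deriv (fun y => ‖profile A t y‖ ^ 2) x) ^ 2 ≤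
      (2 * A * (1 + A)) ^ 2 * (2 * x * bump x) ^ 2 := by
  rw [deriv_norm_profile_sq]
  nlinarith [mul_le_mul_of_nonneg_right (amplitude_sq_le hA x) (sq_nonneg (A * (2 * x * bump x)))]

theorem le_deriv_norm_profile_sq_sq (hA : 0 ≤ A) (x : ℝ) :
    4 * A ^ 4 * (bump x * (2 * x * bump x)) ^ 2 ≤
      (deriv (fun y => ‖profile A t y‖ ^ 2) x) ^ 2 := by
  have h : A * bump x ≤ amplitude A x := by unfold amplitude; linarith
  have h₀ : 0 ≤ A * bump x := mul_nonneg hA bump_pos.le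
  rw [deriv_norm_profile_sq]
  nlinarith [sq_nonneg (A * (2 * x * bump x)), mul_le_mul h h h₀ (h₀.trans h)]

theorem le_bump_mul_amplitude_sq_sub_one (hA : 0 ≤ A) (x : ℝ) :
    2 * A * bump x ^ 2 ≤ bump x * (amplitude A x ^ 2 - 1) := by
  have h₀ : 0 ≤ A * bump x := mul_nonneg hA bump_pos.le
  rw [amplitude_sq_sub_one]
  nlinarith [mul_nonneg (mul_nonneg h₀ h₀) (bump_pos (x := x)).le]

theorem bump_mul_amplitude_sq_sub_one_le (hA : 0 ≤ A) (x : ℝ) :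
    bump x * (amplitude A x ^ 2 - 1) ≤ A * (2 + A) * bump x ^ 2 := by
  rw [amplitude_sq_sub_one]
  nlinarith [mul_le_mul_of_nonneg_left (mul_bump_mul_le hA x) (bump_pos (x := x)).le]

theorem finiteEnergy_profile (hA : 0 ≤ A) : FiniteEnergy (profile A t) := by
  refine ⟨?_, ?_, ?_⟩
  · exact integrable_of_nonneg_of_le ((aestronglyMeasurable_deriv _ _).norm.pow 2)
      ((integrable_two_mul_mul_bump_sq.const_mul _).add (integrable_bump_sq.const_mul _))
      (fun x => by positivity) (norm_deriv_profile_sq_le hA)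
  · exact integrable_of_nonneg_of_le
      ((continuous_const.sub (differentiable_profile.continuous.norm.pow 2)).pow 2
        |>.aestronglyMeasurable)
      (integrable_bump_sq.const_mul _) (fun x => by positivity) (one_sub_norm_profile_sq_sq_le hA)
  · exact integrable_of_nonneg_of_le ((aestronglyMeasurable_deriv _ _).pow 2)
      (integrable_two_mul_mul_bump_sq.const_mul _) (fun x => by positivity)
      (deriv_norm_profile_sq_sq_le hA)

theorem integrable_bump_mul_amplitude_sq_sub_one (hA : 0 ≤ A) :
    Integrable fun x => bump x * (amplitude A x ^ 2 - 1) :=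
  integrable_of_nonneg_of_le (by unfold amplitude bump; fun_prop)
    (integrable_bump_sq.const_mul _)
    (fun x => (by positivity : 0 ≤ 2 * A * bump x ^ 2).trans
      (le_bump_mul_amplitude_sq_sub_one hA x))
    (bump_mul_amplitude_sq_sub_one_le hA)

theorem two_mul_integral_bump_sq_le_amplitudeMass (hA : 0 ≤ A) :
    2 * A * ∫ x, bump x ^ 2 ≤ amplitudeMass A := by
  rw [← integral_const_mul]
  exact integral_mono (integrable_bump_sq.const_mul _) (integrable_bump_mul_amplitude_sq_sub_one hA)
    (le_bump_mul_amplitude_sq_sub_one hA)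

theorem integral_norm_deriv_profile_sq_le (hA : 0 ≤ A) :
    ∫ x, ‖deriv (profile A t) x‖ ^ 2 ≤
      A ^ 2 * (∫ x, (2 * x * bump x) ^ 2) + t ^ 2 * (1 + A) ^ 2 * ∫ x, bump x ^ 2 := by
  rw [← integral_const_mul, ← integral_const_mul, ← integral_add
    (integrable_two_mul_mul_bump_sq.const_mul _) (integrable_bump_sq.const_mul _)]
  exact integral_mono (finiteEnergy_profile hA).1
    ((integrable_two_mul_mul_bump_sq.const_mul _).add (integrable_bump_sq.const_mul _))
    (norm_deriv_profile_sq_le hA)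

theorem le_integral_deriv_norm_profile_sq_sq (hA : 0 ≤ A) :
    4 * A ^ 4 * (∫ x, (bump x * (2 * x * bump x)) ^ 2) ≤
      ∫ x, (deriv (fun y => ‖profile A t y‖ ^ 2) x) ^ 2 := by
  rw [← integral_const_mul]
  exact integral_mono (integrable_bump_mul_two_mul_mul_bump_sq.const_mul _)
    (finiteEnergy_profile hA).2.2
    (le_deriv_norm_profile_sq_sq hA)

end Profile

theorem exists_gradientEnergy_neg {κ : ℝ} (hκ : 0 < κ) (q : ℝ) :
    ∃ U : ℝ → ℂ, Differentiable ℝ U ∧ (∀ x, 1 ≤ ‖U x‖) ∧ FiniteEnergy U ∧ momentum U = q ∧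
      gradientEnergy κ U < 0 := by
  set d := ∫ x, bump x ^ 2
  set a := ∫ x, (2 * x * bump x) ^ 2
  set c := ∫ x, (bump x * (2 * x * bump x)) ^ 2
  have hd : 0 < d := integral_pos_of_pos_on_Ioi integrable_bump_sq (fun _ => sq_nonneg _)
    fun _ _ => pow_pos bump_pos 2
  have hc : 0 < c := integral_pos_of_pos_on_Ioi integrable_bump_mul_two_mul_mul_bump_sq
    (fun _ => sq_nonneg _) fun x hx => by have := bump_pos (x := x); positivity
  obtain ⟨A, hA1, hA⟩ :=
    exists_one_le_sq_mul_add_lt (by positivity : 0 < 2 * κ * c) a (q ^ 2 / d)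
  have hA0 : 0 ≤ A := zero_le_one.trans hA1
  set J := amplitudeMass A
  have hJ : 2 * A * d ≤ J := two_mul_integral_bump_sq_le_amplitudeMass hA0
  have hJ0 : 0 < J := lt_of_lt_of_le (by positivity) hJ
  set t := q / J
  refine ⟨profile A t, differentiable_profile,
    fun x => (norm_profile hA0 x).symm ▸ one_le_amplitude hA0, finiteEnergy_profile hA0,
    by rw [momentum_profile hA0, div_mul_cancel₀ q hJ0.ne'], sub_neg.2 ?_⟩
  have hphase : t ^ 2 * (1 + A) ^ 2 * d ≤ q ^ 2 / d := by
    have h : (1 + A) * d ≤ J := by nlinarith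
    calc t ^ 2 * (1 + A) ^ 2 * d = t ^ 2 * ((1 + A) * d) ^ 2 / d := by field_simp
      _ ≤ t ^ 2 * J ^ 2 / d := by gcongr
      _ = q ^ 2 / d := by rw [← mul_pow, div_mul_cancel₀ q hJ0.ne']
  calc ∫ x, ‖deriv (profile A t) x‖ ^ 2 ≤ A ^ 2 * a + t ^ 2 * (1 + A) ^ 2 * d :=
        integral_norm_deriv_profile_sq_le hA0
    _ < κ / 2 * (4 * A ^ 4 * c) := by linarith
    _ ≤ κ / 2 * ∫ x, (deriv (fun y => ‖profile A t y‖ ^ 2) x) ^ 2 := by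
        gcongr
        exact le_integral_deriv_norm_profile_sq_sq hA0

/-- for κ > 0 the infimum of the energy over nonvanishing maps of the
energy space with prescribed momentum 𝔮 is -∞: there are admissible maps (with all
three energy integrands integrable) of arbitrarily negative energy. -/
theorem stmt5 (κ : ℝ) (hκ : 0 < κ) (q : ℝ) :
    ∀ M : ℝ, ∃ u : ℝ → ℂ,
      Differentiable ℝ u ∧ inX u ∧
      (∃ m : ℝ, 0 < m ∧ ∀ x : ℝ, m ≤ ‖u x‖) ∧
      Integrable (fun x : ℝ => ‖deriv u x‖ ^ 2) volume ∧
      Integrable (fun x : ℝ => (1 - ‖u x‖ ^ 2) ^ 2) volume ∧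
      Integrable (fun x : ℝ => (deriv (fun y : ℝ => ‖u y‖ ^ 2) x) ^ 2) volume ∧
      momentum u = q ∧ energy κ u < M := by
  intro M
  obtain ⟨U, hdiff, hnorm, hfin, hP, hneg⟩ := exists_gradientEnergy_neg hκ q
  obtain ⟨s, hs, hE⟩ := exists_pos_mul_add_inv_mul_lt hneg (potentialEnergy U) M
  have hdiff_s : Differentiable ℝ fun x => U (s * x) := hdiff.comp (differentiable_id.const_mul s)
  have hfin_s := hfin.comp_mul_left hs.ne'
  exact ⟨_, hdiff_s, hfin_s.inX hdiff_s.continuous, ⟨1, one_pos, fun x => hnorm _⟩, hfin_s.1,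
    hfin_s.2.1, hfin_s.2.2, (momentum_comp_mul_left hs).trans hP,
    (energy_comp_mul_left κ hs).trans_lt hE⟩
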